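/- Assume the balance condition α + γ > 1 and set δ = 1 − 1/α + γ/α > 0. For every T > 0 there exists C > 0 such that for all t ∈ [0,T], all s, r ∈ [0,t], and all x, y ∈ ℝ^d, one has |υ_t^s(x) − υ_t^r(x)| ≤ C t^{1/α + δ} and |θ_t^s(y) − θ_t^r(y)| ≤ C t^{1/α + δ}. -/

import Mathlib

open MeasureTheory Real Set

/-- `Euc d` is the Euclidean space `ℝ^d`. -/
abbrev Euc (d : ℕ) := EuclideanSpace ℝ (Fin d)

/-- The Gaussian mollification `b(t,x)` of the drift `b` at scale `t^{1/α}`: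
`b(t,x) = (2π)^{-d/2} t^{-d/α} ∫ b(z) exp(-|z-x|²/(2 t^{2/α})) dz` for `t > 0`
(with the natural boundary value `b(x)` for `t ≤ 0`). -/
noncomputable def moll (d : ℕ) (α : ℝ) (b : Euc d → Euc d) (t : ℝ) (x : Euc d) : Euc d :=
  if t ≤ 0 then b x
  else ((2 * Real.pi) ^ (-(d : ℝ) / 2) * t ^ (-(d : ℝ) / α)) •
    ∫ z : Euc d, Real.exp (-‖z - x‖ ^ 2 / (2 * t ^ (2 / α))) • b z

/-- `IsSol F x0 f` : `f` solves the Cauchy problem `f' (t) = F t (f t)` on `[0,∞)`, `f 0 = x0`. -/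
def IsSol (d : ℕ) (F : ℝ → Euc d → Euc d) (x0 : Euc d) (f : ℝ → Euc d) : Prop :=
  f 0 = x0 ∧ ∀ t : ℝ, 0 ≤ t → HasDerivWithinAt f (F t (f t)) (Set.Ici 0) t

/-!
Both flows have speed at most `C₀`, so `m := max_{[0,t]} |υ^s − υ^r|` satisfies `m ≤ 2C₀t`. For
times in `[0,t]` the shifted mollified drifts are within `M C₀ t^{γ/α}` of `b`, where `M` is the
`γ`-th absolute moment of the standard Gaussian (the mollifier averages `b` at scale `t^{1/α}`).
Since `b` is `γ`-Hölder, `m ≤ 2MC₀ t^{1+γ/α} + C₀ t m^γ`. Either the first term dominates, or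
`m^{1-γ} ≤ 2C₀t`, and then interpolating with `m ≤ 2C₀t` through `m = (m^{1-γ})^{1/α} m^δ` gives
`m ≲ t^{1/α+δ}`; the balance condition is exactly `δ ≥ 0`. The same argument applies to `θ`,
whose drift approximates `-b`.
-/

theorem continuous_of_norm_sub_le_mul_rpow {E F : Type*} [SeminormedAddCommGroup E]
    [SeminormedAddCommGroup F] {f : E → F} {C γ : ℝ} (hγ : 0 < γ)
    (hf : ∀ x y, ‖f x - f y‖ ≤ C * ‖x - y‖ ^ γ) : Continuous f := by
  refine continuous_iff_continuousAt.2 fun x => tendsto_iff_norm_sub_tendsto_zero.2 ?_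
  refine squeeze_zero_norm (fun y => by simpa using hf y x) ?_
  have : Continuous fun y : E => C * ‖y - x‖ ^ γ := by fun_prop (disch := exact hγ.le)
  simpa [zero_rpow hγ.ne'] using this.tendsto x

theorem integrable_exp_neg_mul_sq_norm {V : Type*} [NormedAddCommGroup V] [InnerProductSpace ℝ V]
    [FiniteDimensional ℝ V] [MeasurableSpace V] [BorelSpace V] {a : ℝ} (ha : 0 < a) :
    Integrable fun v : V => rexp (-a * ‖v‖ ^ 2) := by
  have h := (GaussianFourier.integrable_cexp_neg_mul_sq_norm_add (V := V)
      (b := (a : ℂ)) (by simpa using ha) 0 0).norm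
  refine h.congr (.of_forall fun v => ?_)
  simp [Complex.norm_exp, ← Complex.ofReal_pow]

section Gaussian

variable {d : ℕ}

noncomputable def gaussianDensity (d : ℕ) (u : Euc d) : ℝ :=
  (2 * π) ^ (-(d : ℝ) / 2) * rexp (-‖u‖ ^ 2 / 2)

noncomputable def gaussianMoment (d : ℕ) (γ : ℝ) : ℝ :=
  ∫ u, gaussianDensity d u * ‖u‖ ^ γ

theorem gaussianDensity_nonneg (u : Euc d) : 0 ≤ gaussianDensity d u := by
  unfold gaussianDensity; positivity

@[fun_prop]
theorem continuous_gaussianDensity : Continuous (gaussianDensity d) := by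
  unfold gaussianDensity; fun_prop

theorem integrable_gaussianDensity : Integrable (gaussianDensity d) :=
  ((integrable_exp_neg_mul_sq_norm (V := Euc d) (a := 1 / 2) (by norm_num)).const_mul
    ((2 * π) ^ (-(d : ℝ) / 2))).congr (.of_forall fun u => by simp only [gaussianDensity]; ring_nf)

theorem integral_gaussianDensity : ∫ u, gaussianDensity d u = 1 := by
  have h := GaussianFourier.integral_rexp_neg_mul_sq_norm (V := Euc d) (b := 1 / 2) (by norm_num)
  rw [finrank_euclideanSpace_fin] at h
  have he : (fun u : Euc d => rexp (-‖u‖ ^ 2 / 2)) = fun u => rexp (-(1 / 2) * ‖u‖ ^ 2) := by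
    ext u; ring_nf
  simp only [gaussianDensity]
  rw [integral_const_mul, he, h, div_div_eq_mul_div, div_one, mul_comm π,
    ← rpow_add (by positivity), neg_div, neg_add_cancel, rpow_zero]

theorem integrable_gaussianDensity_mul_norm_rpow {γ : ℝ} (hγ0 : 0 ≤ γ) (hγ1 : γ ≤ 1) :
    Integrable fun u : Euc d => gaussianDensity d u * ‖u‖ ^ γ := by
  refine ((integrable_exp_neg_mul_sq_norm (V := Euc d) (a := 1 / 4) (by norm_num)).const_mul
    ((2 * π) ^ (-(d : ℝ) / 2) * rexp 1)).mono' (by fun_prop (disch := exact hγ0))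
    (.of_forall fun u => ?_)
  set r := ‖u‖
  have hr : 0 ≤ r := norm_nonneg u
  have hrpow : r ^ γ ≤ rexp r := by
    rcases le_or_gt r 1 with h | h
    · exact (rpow_le_one hr h hγ0).trans (one_le_exp hr)
    · calc r ^ γ ≤ r ^ (1 : ℝ) := rpow_le_rpow_of_exponent_le h.le hγ1
        _ ≤ r + 1 := by rw [rpow_one]; linarith
        _ ≤ rexp r := add_one_le_exp r
  have hexp : rexp (-r ^ 2 / 2) * rexp r ≤ rexp 1 * rexp (-(1 / 4) * r ^ 2) := by
    rw [← exp_add, ← exp_add]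
    exact exp_le_exp.2 (by nlinarith [sq_nonneg (r - 2)])
  rw [Real.norm_of_nonneg (mul_nonneg (gaussianDensity_nonneg u) (rpow_nonneg hr γ)),
    gaussianDensity, mul_assoc, mul_assoc]
  exact mul_le_mul_of_nonneg_left
    ((mul_le_mul_of_nonneg_left hrpow (exp_pos _).le).trans hexp) (by positivity)

theorem gaussianMoment_nonneg (γ : ℝ) : 0 ≤ gaussianMoment d γ :=
  integral_nonneg fun u => mul_nonneg (gaussianDensity_nonneg u) (rpow_nonneg (norm_nonneg u) γ)

end Gaussian

section Mollifier

variable {d : ℕ} {α γ C₀ t : ℝ} {b : Euc d → Euc d}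

theorem moll_eq_integral (b : Euc d → Euc d) (ht : 0 < t) (x : Euc d) :
    moll d α b t x = ∫ u, gaussianDensity d u • b (t ^ (1 / α) • u + x) := by
  set σ := t ^ (1 / α)
  have hσ : 0 < σ := rpow_pos_of_pos ht _
  have hσ2 : t ^ (2 / α) = σ ^ 2 := by
    rw [← rpow_natCast, ← rpow_mul ht.le]; ring_nf
  have hσd : t ^ (-(d : ℝ) / α) = (σ ^ d)⁻¹ := by
    rw [← rpow_natCast, ← rpow_mul ht.le, ← rpow_neg ht.le]; ring_nf
  set g : Euc d → Euc d := fun z => rexp (-‖z - x‖ ^ 2 / (2 * t ^ (2 / α))) • b z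
  have hg : ∀ u : Euc d, gaussianDensity d u • b (σ • u + x)
      = (2 * π) ^ (-(d : ℝ) / 2) • g (σ • u + x) := by
    intro u
    simp only [g, gaussianDensity, smul_smul, add_sub_cancel_right, norm_smul, hσ2,
      Real.norm_of_nonneg hσ.le]
    congr 3
    field_simp
  simp_rw [hg]
  rw [moll, if_neg ht.not_ge, integral_smul,
    Measure.integral_comp_smul_of_nonneg volume (fun u => g (u + x)) σ (hR := hσ.le),
    integral_add_right_eq_self, finrank_euclideanSpace_fin, smul_smul, hσd]

theorem norm_moll_sub_le_integral (hb : Continuous b) (ht : 0 < t) (x v : Euc d)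
    {g : Euc d → ℝ} (hg : Integrable fun u => gaussianDensity d u * g u)
    (hbg : ∀ u, ‖b (t ^ (1 / α) • u + x) - v‖ ≤ g u) :
    ‖moll d α b t x - v‖ ≤ ∫ u, gaussianDensity d u * g u := by
  have hbound : ∀ u, ‖gaussianDensity d u • (b (t ^ (1 / α) • u + x) - v)‖
      ≤ gaussianDensity d u * g u := fun u => by
    rw [norm_smul, Real.norm_of_nonneg (gaussianDensity_nonneg u)]
    exact mul_le_mul_of_nonneg_left (hbg u) (gaussianDensity_nonneg u)
  have hdiff : Integrable fun u => gaussianDensity d u • (b (t ^ (1 / α) • u + x) - v) :=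
    hg.mono' (by fun_prop) (.of_forall hbound)
  have hv : Integrable fun u => gaussianDensity d u • v := integrable_gaussianDensity.smul_const v
  have hsplit : moll d α b t x - v
      = ∫ u, gaussianDensity d u • (b (t ^ (1 / α) • u + x) - v) := by
    rw [integral_congr_ae (.of_forall fun u => smul_sub _ _ _), integral_sub _ hv,
      integral_smul_const, integral_gaussianDensity, one_smul, moll_eq_integral b ht]
    exact (hdiff.add hv).congr
      (.of_forall fun u => by simp only [Pi.add_apply, ← smul_add, sub_add_cancel])
  rw [hsplit]
  exact norm_integral_le_of_norm_le hg (.of_forall hbound)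

theorem norm_moll_le (hb : Continuous b) (hb_bdd : ∀ x, ‖b x‖ ≤ C₀) (t : ℝ) (x : Euc d) :
    ‖moll d α b t x‖ ≤ C₀ := by
  rcases le_or_gt t 0 with ht | ht
  · rw [moll, if_pos ht]; exact hb_bdd x
  · simpa [integral_mul_const, integral_gaussianDensity] using
      norm_moll_sub_le_integral hb ht x 0 (integrable_gaussianDensity.mul_const C₀)
        (fun u => by simpa using hb_bdd _)

theorem norm_moll_sub_le (hγ0 : 0 < γ) (hγ1 : γ ≤ 1) (hC₀ : 0 ≤ C₀)
    (hb_hol : ∀ x y, ‖b x - b y‖ ≤ C₀ * ‖x - y‖ ^ γ) (ht : 0 ≤ t) (x : Euc d) :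
    ‖moll d α b t x - b x‖ ≤ gaussianMoment d γ * C₀ * t ^ (γ / α) := by
  rcases ht.eq_or_lt with rfl | ht
  · rw [moll, if_pos le_rfl, sub_self, norm_zero]
    have := gaussianMoment_nonneg (d := d) γ
    positivity
  have hbg : ∀ u, ‖b (t ^ (1 / α) • u + x) - b x‖ ≤ C₀ * t ^ (γ / α) * ‖u‖ ^ γ := fun u => by
    have h := hb_hol (t ^ (1 / α) • u + x) x
    rwa [add_sub_cancel_right, norm_smul, Real.norm_of_nonneg (rpow_nonneg ht.le _),
      mul_rpow (rpow_nonneg ht.le _) (norm_nonneg u), ← rpow_mul ht.le, one_div_mul_eq_div,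
      ← mul_assoc] at h
  have h := norm_moll_sub_le_integral (continuous_of_norm_sub_le_mul_rpow hγ0 hb_hol) ht x (b x)
    (((integrable_gaussianDensity_mul_norm_rpow hγ0.le hγ1).const_mul (C₀ * t ^ (γ / α))).congr
      (.of_forall fun u => by ring)) hbg
  calc _ ≤ _ := h
    _ = gaussianMoment d γ * C₀ * t ^ (γ / α) := by
      rw [gaussianMoment, ← integral_mul_const, ← integral_mul_const]
      exact integral_congr_ae (.of_forall fun u => by dsimp only; ring)

end Mollifier

theorem le_mul_rpow_of_le_add_mul_rpow {p δ γ A B C t m : ℝ} (hp : 0 ≤ p) (hδ : 0 ≤ δ)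
    (hpδ : (1 - γ) * p + δ = 1) (hA : 0 ≤ A) (hB : 0 ≤ B) (hC : 0 ≤ C) (ht : 0 ≤ t)
    (hm : 0 ≤ m) (hmB : m ≤ B * t) (hmA : m ≤ A * t ^ (p + δ) + C * t * m ^ γ) :
    m ≤ (2 * A + (2 * C) ^ p * B ^ δ) * t ^ (p + δ) := by
  have hK : 0 ≤ (2 * C) ^ p * B ^ δ * t ^ (p + δ) := by positivity
  rcases le_or_gt (C * t * m ^ γ) (m / 2) with hsmall | hlarge
  · nlinarith [rpow_nonneg ht (p + δ)]
  rcases hm.eq_or_lt with rfl | hm0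
  · nlinarith [rpow_nonneg ht (p + δ)]
  have hlt : m ^ (1 - γ) ≤ 2 * C * t := by
    rw [rpow_sub hm0, rpow_one, div_le_iff₀ (rpow_pos_of_pos hm0 γ)]
    linarith
  calc m = (m ^ (1 - γ)) ^ p * m ^ δ := by rw [← rpow_mul hm0.le, ← rpow_add hm0, hpδ, rpow_one]
    _ ≤ (2 * C * t) ^ p * (B * t) ^ δ := by gcongr
    _ = (2 * C) ^ p * B ^ δ * t ^ (p + δ) := by
      rw [mul_rpow (by positivity) ht, mul_rpow hB ht, rpow_add_of_nonneg ht hp hδ]; ring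
    _ ≤ _ := by nlinarith [rpow_nonneg ht (p + δ)]

section ApproximateFlows

variable {d : ℕ} {F : ℝ → Euc d → Euc d} {β : Euc d → Euc d} {A B C γ κ t s r : ℝ} {x : Euc d}
  {f g : ℝ → Euc d}

theorem IsSol.continuousOn_Icc (hf : IsSol d F x f) (t : ℝ) : ContinuousOn f (Icc 0 t) :=
  fun τ hτ => (hf.2 τ hτ.1).continuousWithinAt.mono Icc_subset_Ici_self

theorem IsSol.norm_sub_le_mul {G : ℝ → Euc d → Euc d} {c : ℝ} (hf : IsSol d F x f)
    (hg : IsSol d G x g) (hc : ∀ τ ∈ Ico 0 t, ‖F τ (f τ) - G τ (g τ)‖ ≤ c) :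
    ∀ τ ∈ Icc 0 t, ‖f τ - g τ‖ ≤ c * τ := by
  have h := norm_image_sub_le_of_norm_deriv_right_le_segment
    ((hf.continuousOn_Icc t).sub (hg.continuousOn_Icc t))
    (fun τ hτ => ((hf.2 τ hτ.1).sub (hg.2 τ hτ.1)).mono (Ici_subset_Ici.2 hτ.1)) hc
  simpa [hf.1, hg.1] using h

theorem norm_sub_le_of_near_holder (hFβ : ∀ τ, 0 ≤ τ → ∀ z, ‖F τ z - β z‖ ≤ A * τ ^ κ)
    (hβ : ∀ y z, ‖β y - β z‖ ≤ C * ‖y - z‖ ^ γ) {a a' : ℝ} (ha : 0 ≤ a) (ha' : 0 ≤ a')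
    (y z : Euc d) : ‖F a y - F a' z‖ ≤ A * a ^ κ + C * ‖y - z‖ ^ γ + A * a' ^ κ := by
  have h₁ := norm_sub_le_norm_sub_add_norm_sub (F a y) (β y) (F a' z)
  have h₂ := norm_sub_le_norm_sub_add_norm_sub (β y) (β z) (F a' z)
  rw [norm_sub_rev (β z)] at h₂
  linarith [hFβ a ha y, hFβ a' ha' z, hβ y z]

theorem exists_bounds_of_isSol_shifted (hF : ∀ τ z, ‖F τ z‖ ≤ B)
    (hFβ : ∀ τ, 0 ≤ τ → ∀ z, ‖F τ z - β z‖ ≤ A * τ ^ κ)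
    (hβ : ∀ y z, ‖β y - β z‖ ≤ C * ‖y - z‖ ^ γ) (hA : 0 ≤ A) (hκ : 0 ≤ κ) (hC : 0 ≤ C)
    (hγ : 0 ≤ γ) (hs : s ∈ Icc 0 t) (hr : r ∈ Icc 0 t)
    (hf : IsSol d (fun τ z => F |τ - s| z) x f) (hg : IsSol d (fun τ z => F |τ - r| z) x g) :
    ∃ m, ‖f t - g t‖ ≤ m ∧ m ≤ 2 * B * t ∧ m ≤ 2 * A * t ^ (κ + 1) + C * t * m ^ γ := by
  have ht : 0 ≤ t := hs.1.trans hs.2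
  obtain ⟨u, hu, hmax⟩ := isCompact_Icc.exists_isMaxOn (nonempty_Icc.2 ht)
    (((hf.continuousOn_Icc t).sub (hg.continuousOn_Icc t)).norm)
  have hle : ∀ τ ∈ Icc 0 t, ‖f τ - g τ‖ ≤ ‖f u - g u‖ := hmax
  have hB : 0 ≤ B := (norm_nonneg _).trans (hF 0 x)
  refine ⟨_, hle t ⟨ht, le_rfl⟩, ?_, ?_⟩
  · refine (hf.norm_sub_le_mul hg (fun τ _ => ?_) u hu).trans (by nlinarith [hu.2])
    linarith [norm_sub_le (F |τ - s| (f τ)) (F |τ - r| (g τ)), hF |τ - s| (f τ), hF |τ - r| (g τ)]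
  have hshift : ∀ w ∈ Icc 0 t, ∀ τ ∈ Ico 0 t, A * |τ - w| ^ κ ≤ A * t ^ κ := fun w hw τ hτ =>
    mul_le_mul_of_nonneg_left (rpow_le_rpow (abs_nonneg _)
      (abs_sub_le_iff.2 ⟨by linarith [hw.1, hτ.2], by linarith [hw.2, hτ.1]⟩) hκ) hA
  have hdrift : ∀ τ ∈ Ico 0 t, ‖F |τ - s| (f τ) - F |τ - r| (g τ)‖
      ≤ 2 * A * t ^ κ + C * ‖f u - g u‖ ^ γ := fun τ hτ => by
    have hgap : C * ‖f τ - g τ‖ ^ γ ≤ C * ‖f u - g u‖ ^ γ := mul_le_mul_of_nonneg_left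
      (rpow_le_rpow (norm_nonneg _) (hle τ (Ico_subset_Icc_self hτ)) hγ) hC
    linarith [norm_sub_le_of_near_holder hFβ hβ (abs_nonneg (τ - s)) (abs_nonneg (τ - r))
      (f τ) (g τ), hshift s hs τ hτ, hshift r hr τ hτ]
  calc ‖f u - g u‖ ≤ (2 * A * t ^ κ + C * ‖f u - g u‖ ^ γ) * u :=
        hf.norm_sub_le_mul hg hdrift u hu
    _ ≤ (2 * A * t ^ κ + C * ‖f u - g u‖ ^ γ) * t := by gcongr; exact hu.2
    _ = 2 * A * t ^ (κ + 1) + C * t * ‖f u - g u‖ ^ γ := by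
        rw [rpow_add_one' ht (by positivity)]; ring

theorem norm_sub_le_mul_rpow_of_isSol_shifted {α δ : ℝ} (hα : 0 < α) (hδ0 : 0 ≤ δ)
    (hδ : δ = 1 - 1 / α + γ / α) (hF : ∀ τ z, ‖F τ z‖ ≤ B)
    (hFβ : ∀ τ, 0 ≤ τ → ∀ z, ‖F τ z - β z‖ ≤ A * τ ^ (γ / α))
    (hβ : ∀ y z, ‖β y - β z‖ ≤ C * ‖y - z‖ ^ γ) (hA : 0 ≤ A) (hC : 0 ≤ C) (hγ : 0 ≤ γ)
    (hs : s ∈ Icc 0 t) (hr : r ∈ Icc 0 t)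
    (hf : IsSol d (fun τ z => F |τ - s| z) x f) (hg : IsSol d (fun τ z => F |τ - r| z) x g) :
    ‖f t - g t‖ ≤ (4 * A + (2 * C) ^ (1 / α) * (2 * B) ^ δ) * t ^ (1 / α + δ) := by
  obtain ⟨m, hfg, hmB, hmA⟩ :=
    exists_bounds_of_isSol_shifted hF hFβ hβ hA (by positivity) hC hγ hs hr hf hg
  have hexp : γ / α + 1 = 1 / α + δ := by rw [hδ]; ring
  rw [hexp] at hmA
  have hB : 0 ≤ 2 * B := by linarith [(norm_nonneg _).trans (hF 0 x)]
  calc ‖f t - g t‖ ≤ m := hfg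
    _ ≤ (2 * (2 * A) + (2 * C) ^ (1 / α) * (2 * B) ^ δ) * t ^ (1 / α + δ) :=
      le_mul_rpow_of_le_add_mul_rpow (by positivity) hδ0 (by rw [hδ]; ring) (by positivity)
        hB hC (hs.1.trans hs.2) ((norm_nonneg _).trans hfg) hmB hmA
    _ = _ := by ring

end ApproximateFlows

theorem approximate_flows_closeness_general
    (d : ℕ) (α γ C₀ : ℝ)
    (hα : α ∈ Set.Ioo (0 : ℝ) 2) (hγ : γ ∈ Set.Ioc (0 : ℝ) 1) (hC₀ : 0 < C₀)
    (b : Euc d → Euc d)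
    (hb_bdd : ∀ x, ‖b x‖ ≤ C₀)
    (hb_hol : ∀ x y, ‖b x - b y‖ ≤ C₀ * ‖x - y‖ ^ γ)
    (hbal : 1 < α + γ)
    (δ : ℝ) (hδ : δ = 1 - 1 / α + γ / α) :
    ∀ T > (0 : ℝ), ∃ C > (0 : ℝ),
      ∀ t ∈ Set.Icc (0 : ℝ) T, ∀ s ∈ Set.Icc (0 : ℝ) t, ∀ r ∈ Set.Icc (0 : ℝ) t,
      ∀ x y : Euc d,
      (∀ us ur : ℝ → Euc d,
        IsSol d (fun τ z => moll d α b |τ - s| z) x us →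
        IsSol d (fun τ z => moll d α b |τ - r| z) x ur →
        ‖us t - ur t‖ ≤ C * t ^ (1 / α + δ)) ∧
      (∀ ts tr : ℝ → Euc d,
        IsSol d (fun τ z => -moll d α b |τ - s| z) y ts →
        IsSol d (fun τ z => -moll d α b |τ - r| z) y tr →
        ‖ts t - tr t‖ ≤ C * t ^ (1 / α + δ)) := by
  intro T _
  obtain ⟨hα0, -⟩ := hα
  obtain ⟨hγ0, hγ1⟩ := hγ
  have hb : Continuous b := continuous_of_norm_sub_le_mul_rpow hγ0 hb_hol
  have hδ0 : 0 ≤ δ := by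
    rw [hδ, show 1 - 1 / α + γ / α = (α + γ - 1) / α by field_simp; ring]
    exact div_nonneg (by linarith) hα0.le
  have hM := gaussianMoment_nonneg (d := d) γ
  have hmoll_sub := fun τ (hτ : 0 ≤ τ) z => norm_moll_sub_le (α := α) hγ0 hγ1 hC₀.le hb_hol hτ z
  refine ⟨4 * (gaussianMoment d γ * C₀) + (2 * C₀) ^ (1 / α) * (2 * C₀) ^ δ, by positivity,
    fun t _ s hs r hr x y => ⟨fun us ur hus hur => ?_, fun ts tr hts htr => ?_⟩⟩
  · exact norm_sub_le_mul_rpow_of_isSol_shifted hα0 hδ0 hδ (norm_moll_le hb hb_bdd) hmoll_sub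
      hb_hol (by positivity) hC₀.le hγ0.le hs hr hus hur
  · refine norm_sub_le_mul_rpow_of_isSol_shifted (F := fun τ z => -moll d α b τ z)
      (β := fun z => -b z) hα0 hδ0 hδ (fun τ z => by simpa using norm_moll_le hb hb_bdd τ z)
      (fun τ hτ z => ?_) (fun y z => ?_) (by positivity) hC₀.le hγ0.le hs hr hts htr
    · rw [neg_sub_neg, norm_sub_rev]; exact hmoll_sub τ hτ z
    · rw [neg_sub_neg, norm_sub_rev]; exact hb_hol y z

theorem approximate_flows_closeness
    (d : ℕ) (hd : 1 ≤ d) (α γ C₀ : ℝ)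
    (hα : α ∈ Set.Ioo (0 : ℝ) 2) (hγ : γ ∈ Set.Ioc (0 : ℝ) 1) (hC₀ : 0 < C₀)
    (b : Euc d → Euc d)
    (hb_bdd : ∀ x, ‖b x‖ ≤ C₀)
    (hb_hol : ∀ x y, ‖b x - b y‖ ≤ C₀ * ‖x - y‖ ^ γ)
    (hbal : 1 < α + γ)
    (δ : ℝ) (hδ : δ = 1 - 1 / α + γ / α) :
    ∀ T > (0 : ℝ), ∃ C > (0 : ℝ),
      ∀ t ∈ Set.Icc (0 : ℝ) T, ∀ s ∈ Set.Icc (0 : ℝ) t, ∀ r ∈ Set.Icc (0 : ℝ) t,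
      ∀ x y : Euc d,
      (∀ us ur : ℝ → Euc d,
        IsSol d (fun τ z => moll d α b |τ - s| z) x us →
        IsSol d (fun τ z => moll d α b |τ - r| z) x ur →
        ‖us t - ur t‖ ≤ C * t ^ (1 / α + δ)) ∧
      (∀ ts tr : ℝ → Euc d,
        IsSol d (fun τ z => -moll d α b |τ - s| z) y ts →
        IsSol d (fun τ z => -moll d α b |τ - r| z) y tr →
        ‖ts t - tr t‖ ≤ C * t ^ (1 / α + δ)) :=
  approximate_flows_closeness_general d α γ C₀ hα hγ hC₀ b hb_bdd hb_hol hbal δ hδ
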